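/- Let X be a nonempty cocompact proper CAT(0) metric space and let R, ε, c > 0 be real numbers. Then there exists k = k(R, ε, c) > 0 such that for all points o, z, y, x ∈ X satisfying: (1) d(o, z) + d(z, y) = d(o, y) (i.e. z lies on a geodesic from o to y); (2) d(x, y) ≤ R and d(z, y) ≥ k; (3) z is a CAT(-1) point of radius c; every geodesic σ : [0,1] → X from o to x meets the open ball of radius ε around z: there exists s ∈ [0,1] with d(σ(s), z) < ε. -/

import Mathlib

open Metric Real

/-- A geodesic from `x` to `y`, parametrized affinely on `[0,1]`. -/
def IsGeodesic {X : Type*} [MetricSpace X] (σ : ℝ → X) (x y : X) : Prop :=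
  σ 0 = x ∧ σ 1 = y ∧
    ∀ s ∈ Set.Icc (0:ℝ) 1, ∀ t ∈ Set.Icc (0:ℝ) 1,
      dist (σ s) (σ t) = |s - t| * dist x y

/-- A geodesic space: every pair of points is joined by a geodesic. -/
def GeodesicMetricSpace (X : Type*) [MetricSpace X] : Prop :=
  ∀ x y : X, ∃ σ : ℝ → X, IsGeodesic σ x y

/-- The comparison point at parameter `s` on the Euclidean segment from `p` to `q`. -/
noncomputable def cmpPt (p q : EuclideanSpace ℝ (Fin 2)) (s : ℝ) : EuclideanSpace ℝ (Fin 2) :=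
  p + s • (q - p)

/-- A CAT(0) space: a geodesic space in which every geodesic triangle satisfies the
CAT(0) comparison inequality with respect to the Euclidean plane. -/
def IsCAT0 (X : Type*) [MetricSpace X] : Prop :=
  GeodesicMetricSpace X ∧
    ∀ (p q r : X) (σpq σqr σrp : ℝ → X),
      IsGeodesic σpq p q → IsGeodesic σqr q r → IsGeodesic σrp r p →
      ∀ p' q' r' : EuclideanSpace ℝ (Fin 2),
        dist p' q' = dist p q → dist q' r' = dist q r → dist r' p' = dist r p →
        ∀ (i j : Fin 3), ∀ s ∈ Set.Icc (0:ℝ) 1, ∀ t ∈ Set.Icc (0:ℝ) 1,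
          dist (![σpq, σqr, σrp] i s) (![σpq, σqr, σrp] j t) ≤
            dist (![cmpPt p' q', cmpPt q' r', cmpPt r' p'] i s)
                 (![cmpPt p' q', cmpPt q' r', cmpPt r' p'] j t)

/-- `z` is a CAT(-1) point of radius `c > 0`: every geodesic triangle contained in the
open ball `B(z, c)` admits a comparison triangle in the hyperbolic plane `ℍ²` (the upper
half-plane) for which the CAT(-1) comparison inequality holds. -/
def IsCATm1Point {X : Type*} [MetricSpace X] (z : X) (c : ℝ) : Prop :=
  0 < c ∧
    ∀ (p q r : X) (σpq σqr σrp : ℝ → X),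
      IsGeodesic σpq p q → IsGeodesic σqr q r → IsGeodesic σrp r p →
      (∀ s ∈ Set.Icc (0:ℝ) 1, σpq s ∈ Metric.ball z c) →
      (∀ s ∈ Set.Icc (0:ℝ) 1, σqr s ∈ Metric.ball z c) →
      (∀ s ∈ Set.Icc (0:ℝ) 1, σrp s ∈ Metric.ball z c) →
      ∃ (p' q' r' : UpperHalfPlane) (τpq τqr τrp : ℝ → UpperHalfPlane),
        IsGeodesic τpq p' q' ∧ IsGeodesic τqr q' r' ∧ IsGeodesic τrp r' p' ∧
        dist p' q' = dist p q ∧ dist q' r' = dist q r ∧ dist r' p' = dist r p ∧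
        ∀ (i j : Fin 3), ∀ s ∈ Set.Icc (0:ℝ) 1, ∀ t ∈ Set.Icc (0:ℝ) 1,
          dist (![σpq, σqr, σrp] i s) (![σpq, σqr, σrp] j t) ≤
            dist (![τpq, τqr, τrp] i s) (![τpq, τqr, τrp] j t)

/-- A geodesic ray: an isometric embedding of `[0, ∞)`. -/
def IsGeodesicRay {X : Type*} [MetricSpace X] (r : ℝ → X) : Prop :=
  ∀ s t : ℝ, 0 ≤ s → 0 ≤ t → dist (r s) (r t) = |s - t|

/-- A geodesic line: an isometric embedding of `ℝ`. -/
def IsGeodesicLine {X : Type*} [MetricSpace X] (γ : ℝ → X) : Prop :=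
  ∀ s t : ℝ, dist (γ s) (γ t) = |s - t|

/-- Geodesic completeness: every nondegenerate geodesic segment extends to a geodesic line. -/
def GeodesicallyComplete (X : Type*) [MetricSpace X] : Prop :=
  ∀ (x y : X) (σ : ℝ → X), IsGeodesic σ x y → x ≠ y →
    ∃ γ : ℝ → X, IsGeodesicLine γ ∧ ∀ s ∈ Set.Icc (0:ℝ) 1, σ s = γ (s * dist x y)

/-- Cocompactness: some compact set meets every orbit of the isometry group. -/
def Cocompact (X : Type*) [MetricSpace X] : Prop :=
  ∃ K : Set X, IsCompact K ∧ ∀ x : X, ∃ g : X ≃ᵢ X, g x ∈ K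

/-- The set of projections of a point `u` onto a subset `Y`. -/
def projSet {X : Type*} [MetricSpace X] (Y : Set X) (u : X) : Set X :=
  {p ∈ Y | dist u p = Metric.infDist u Y}

/-- `Y` is `B`-contracting: projections of balls disjoint from `Y` have diameter at most `B`. -/
def IsContracting {X : Type*} [MetricSpace X] (Y : Set X) (B : ℝ) : Prop :=
  0 ≤ B ∧
    ∀ (u : X) (ρ : ℝ), Disjoint (Metric.ball u ρ) Y →
      ∀ p q : X, (∃ v ∈ Metric.ball u ρ, p ∈ projSet Y v) →
        (∃ v ∈ Metric.ball u ρ, q ∈ projSet Y v) → dist p q ≤ B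

/-!
Suppose a geodesic `σ` from `o` to `x` avoids `B(z, ε)`. Slide the endpoint of a geodesic from `o`
along a geodesic from `y` to `x` and follow its point at distance `d(o, z)` from `o`: by the
intermediate value theorem it is, for some endpoint `w` with `d(y, w) ≤ R`, at distance exactly `t`
from `z`, where `t` is small. Call it `u`, and let `a`, `b` be the points at distance `t` before and
after `z` on `[o, y]`. CAT(0) comparison gives `d(u, a)² ≤ 2t²` and, because `[o, y]` and `[o, w]`
fellow-travel near `z` once `d(z, y)` is large, `d(u, b)² ≤ t² + (t + e)²`. On the other hand the
triangle `a u b` lies in the CAT(-1) ball around `z`, and the hyperbolic median identity gives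
`2 cosh² t ≤ cosh d(u, a) + cosh d(u, b)`. For small `e` this contradicts the strict inequality
`cosh √(x² + y²) < cosh x cosh y`.
-/

open Set

theorem div_dist_mem_Icc {X : Type*} [PseudoMetricSpace X] {x y : X} {r : ℝ} (hr : 0 ≤ r)
    (hrd : r ≤ dist x y) : r / dist x y ∈ Icc (0:ℝ) 1 :=
  ⟨div_nonneg hr (hr.trans hrd), div_le_one_of_le₀ hrd dist_nonneg⟩

theorem div_dist_mul_dist {X : Type*} [PseudoMetricSpace X] {x y : X} {r : ℝ} (hr : 0 ≤ r)
    (hrd : r ≤ dist x y) : r / dist x y * dist x y = r :=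
  div_mul_cancel_of_imp fun h => le_antisymm (h ▸ hrd) hr

namespace IsGeodesic

variable {X : Type*} [MetricSpace X] {σ : ℝ → X} {x y : X} {r r' s t : ℝ}

theorem dist_eq (h : IsGeodesic σ x y) (hs : s ∈ Icc (0:ℝ) 1) (ht : t ∈ Icc (0:ℝ) 1) :
    dist (σ s) (σ t) = |s - t| * dist x y :=
  h.2.2 s hs t ht

theorem dist_left (h : IsGeodesic σ x y) (hs : s ∈ Icc (0:ℝ) 1) :
    dist x (σ s) = s * dist x y := by
  simpa [h.1, abs_of_nonneg hs.1] using h.dist_eq (left_mem_Icc.2 zero_le_one) hs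

theorem dist_right (h : IsGeodesic σ x y) (hs : s ∈ Icc (0:ℝ) 1) :
    dist (σ s) y = (1 - s) * dist x y := by
  simpa [h.2.1, abs_sub_comm s, abs_of_nonneg (sub_nonneg.2 hs.2)] using
    h.dist_eq hs (right_mem_Icc.2 zero_le_one)

theorem symm (h : IsGeodesic σ x y) : IsGeodesic (fun t => σ (1 - t)) y x := by
  refine ⟨by simpa using h.2.1, by simpa using h.1, fun s hs t ht => ?_⟩
  have hmem : ∀ u ∈ Icc (0:ℝ) 1, 1 - u ∈ Icc (0:ℝ) 1 := fun u hu =>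
    ⟨sub_nonneg.2 hu.2, sub_le_self 1 hu.1⟩
  rw [h.dist_eq (hmem s hs) (hmem t ht), dist_comm x y, abs_sub_comm, sub_sub_sub_cancel_left]

theorem restrict (h : IsGeodesic σ x y) {t₁ t₂ : ℝ} (h₁ : t₁ ∈ Icc (0:ℝ) 1)
    (h₂ : t₂ ∈ Icc (0:ℝ) 1) (h₁₂ : t₁ ≤ t₂) :
    IsGeodesic (fun t => σ (t₁ + t * (t₂ - t₁))) (σ t₁) (σ t₂) := by
  have hmem : ∀ u ∈ Icc (0:ℝ) 1, t₁ + u * (t₂ - t₁) ∈ Icc (0:ℝ) 1 :=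
    fun u hu => (convex_Icc (0:ℝ) 1).add_smul_sub_mem h₁ h₂ hu
  refine ⟨by simp, by simp, fun s hs t ht => ?_⟩
  rw [h.dist_eq (hmem s hs) (hmem t ht), h.dist_eq h₁ h₂, abs_sub_comm t₁,
    abs_of_nonneg (sub_nonneg.2 h₁₂), add_sub_add_left_eq_sub, ← sub_mul, abs_mul,
    abs_of_nonneg (sub_nonneg.2 h₁₂), mul_assoc]

theorem dist_div_div (h : IsGeodesic σ x y) (hr : 0 ≤ r) (hrd : r ≤ dist x y) (hr' : 0 ≤ r')
    (hr'd : r' ≤ dist x y) : dist (σ (r / dist x y)) (σ (r' / dist x y)) = |r - r'| := by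
  have := abs_mul (r / dist x y - r' / dist x y) (dist x y)
  rw [abs_of_nonneg dist_nonneg, sub_mul, div_dist_mul_dist hr hrd, div_dist_mul_dist hr' hr'd]
    at this
  rw [h.dist_eq (div_dist_mem_Icc hr hrd) (div_dist_mem_Icc hr' hr'd), ← this]

theorem dist_left_div (h : IsGeodesic σ x y) (hr : 0 ≤ r) (hrd : r ≤ dist x y) :
    dist x (σ (r / dist x y)) = r := by
  rw [h.dist_left (div_dist_mem_Icc hr hrd), div_dist_mul_dist hr hrd]

end IsGeodesic

theorem dist_cmpPt_cmpPt_one_sub (p q r : EuclideanSpace ℝ (Fin 2)) {s : ℝ} (hs : 0 ≤ s) :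
    dist (cmpPt p q s) (cmpPt r p (1 - s)) = s * dist q r := by
  rw [dist_eq_norm, dist_eq_norm, show cmpPt p q s - cmpPt r p (1 - s) = s • (q - r) by
    simp only [cmpPt]; module, norm_smul, Real.norm_of_nonneg hs]

theorem dist_cmpPt_sq (p q r : EuclideanSpace ℝ (Fin 2)) (s : ℝ) :
    dist (cmpPt p q s) r ^ 2 =
      (1 - s) * dist p r ^ 2 + s * dist q r ^ 2 - s * (1 - s) * dist p q ^ 2 := by
  have e₁ : cmpPt p q s - r = (1 - s) • (p - r) + s • (q - r) := by simp only [cmpPt]; module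
  have e₂ : p - q = (p - r) - (q - r) := by abel
  rw [dist_eq_norm, dist_eq_norm, dist_eq_norm, dist_eq_norm, e₁, e₂, norm_add_sq_real,
    norm_sub_sq_real (p - r), norm_smul, norm_smul, real_inner_smul_left, real_inner_smul_right,
    mul_pow, mul_pow, Real.norm_eq_abs, Real.norm_eq_abs, sq_abs, sq_abs]
  ring

theorem EuclideanSpace.dist_vec_two (a b c d : ℝ) :
    dist !₂[a, b] !₂[c, d] = √((a - c) ^ 2 + (b - d) ^ 2) := by
  simp [EuclideanSpace.dist_eq, Fin.sum_univ_two, Real.dist_eq, sq_abs]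

theorem exists_triangle_dist_eq {a b c : ℝ} (ha : 0 ≤ a) (hb : 0 ≤ b) (hc : 0 ≤ c)
    (hb_le : b ≤ a + c) (ha_le : a ≤ b + c) (hc_le : c ≤ a + b) :
    ∃ p q r : EuclideanSpace ℝ (Fin 2), dist p q = a ∧ dist q r = b ∧ dist r p = c := by
  set x := (a ^ 2 + c ^ 2 - b ^ 2) / (2 * a)
  have hx : 2 * a * x = a ^ 2 + c ^ 2 - b ^ 2 := by
    rcases ha.eq_or_lt with rfl | ha
    · nlinarith
    · simp only [x]; field_simp
  have hxc : x ^ 2 ≤ c ^ 2 := by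
    rcases ha.eq_or_lt with rfl | ha
    · simp [x, sq_nonneg]
    · refine le_of_mul_le_mul_left ?_ (by positivity : 0 < (2 * a) ^ 2)
      nlinarith [mul_nonneg (by nlinarith : 0 ≤ (a + c) ^ 2 - b ^ 2)
        (by nlinarith : 0 ≤ b ^ 2 - (a - c) ^ 2)]
  have hy := Real.sq_sqrt (sub_nonneg.2 hxc)
  refine ⟨!₂[0, 0], !₂[a, 0], !₂[x, √(c ^ 2 - x ^ 2)], ?_, ?_, ?_⟩ <;>
    rw [EuclideanSpace.dist_vec_two]
  · simp [Real.sqrt_sq ha]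
  · conv_rhs => rw [← Real.sqrt_sq hb]
    congr 1; nlinarith
  · conv_rhs => rw [← Real.sqrt_sq hc]
    congr 1; nlinarith

theorem exists_comparison_triangle {X : Type*} [MetricSpace X] (p q r : X) :
    ∃ p' q' r' : EuclideanSpace ℝ (Fin 2),
      dist p' q' = dist p q ∧ dist q' r' = dist q r ∧ dist r' p' = dist r p :=
  exists_triangle_dist_eq dist_nonneg dist_nonneg dist_nonneg
    (by linarith [dist_triangle q p r, dist_comm p q, dist_comm r p])
    (by linarith [dist_triangle p r q, dist_comm r q, dist_comm r p])
    (by linarith [dist_triangle r q p, dist_comm p q, dist_comm r q])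

namespace IsCAT0

open IsGeodesic

variable {X : Type*} [MetricSpace X] {o p q p' q' v w x y z : X} {α β γ η σ : ℝ → X}
  {r s t : ℝ}

theorem dist_le_mul (hX : IsCAT0 X) (hα : IsGeodesic α o p) (hβ : IsGeodesic β o q)
    (ht : t ∈ Icc (0:ℝ) 1) : dist (α t) (β t) ≤ t * dist p q := by
  obtain ⟨ξ, hξ⟩ := hX.1 p q
  obtain ⟨o', p', q', h₁, h₂, h₃⟩ := exists_comparison_triangle o p q
  have ht' : 1 - t ∈ Icc (0:ℝ) 1 := ⟨sub_nonneg.2 ht.2, by linarith [ht.1]⟩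
  have key := hX.2 o p q α ξ _ hα hξ hβ.symm o' p' q' h₁ h₂ h₃ 0 2 t ht (1 - t) ht'
  simp only [Matrix.cons_val_zero, Matrix.cons_val_two, Matrix.tail_cons, Matrix.head_cons,
    sub_sub_cancel] at key
  rwa [dist_cmpPt_cmpPt_one_sub _ _ _ ht.1, h₂] at key

theorem eq_of_isGeodesic (hX : IsCAT0 X) (hα : IsGeodesic α p q) (hβ : IsGeodesic β p q)
    (ht : t ∈ Icc (0:ℝ) 1) : α t = β t :=
  dist_le_zero.1 (by simpa using hX.dist_le_mul hα hβ ht)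

theorem dist_le_add (hX : IsCAT0 X) (hα : IsGeodesic α p q) (hβ : IsGeodesic β p' q')
    (ht : t ∈ Icc (0:ℝ) 1) : dist (α t) (β t) ≤ (1 - t) * dist p p' + t * dist q q' := by
  obtain ⟨ξ, hξ⟩ := hX.1 p q'
  have ht' : 1 - t ∈ Icc (0:ℝ) 1 := ⟨sub_nonneg.2 ht.2, by linarith [ht.1]⟩
  have h₁ := hX.dist_le_mul hα hξ ht
  have h₂ := hX.dist_le_mul hξ.symm hβ.symm ht'
  simp only [sub_sub_cancel] at h₂
  linarith [dist_triangle (α t) (ξ t) (β t)]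

theorem dist_sq_le (hX : IsCAT0 X) (hα : IsGeodesic α o v) (w : X) (hs : s ∈ Icc (0:ℝ) 1) :
    dist (α s) w ^ 2 ≤
      (1 - s) * dist o w ^ 2 + s * dist v w ^ 2 - s * (1 - s) * dist o v ^ 2 := by
  obtain ⟨ξ, hξ⟩ := hX.1 v w
  obtain ⟨ζ, hζ⟩ := hX.1 w o
  obtain ⟨o', v', w', h₁, h₂, h₃⟩ := exists_comparison_triangle o v w
  have key := hX.2 o v w α ξ ζ hα hξ hζ o' v' w' h₁ h₂ h₃ 0 2 s hs 0 (left_mem_Icc.2 zero_le_one)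
  simp only [Matrix.cons_val_zero, Matrix.cons_val_two, Matrix.tail_cons, Matrix.head_cons,
    hζ.1, cmpPt, zero_smul, add_zero] at key
  calc dist (α s) w ^ 2 ≤ dist (cmpPt o' v' s) w' ^ 2 := pow_le_pow_left₀ dist_nonneg key 2
    _ = _ := by rw [dist_cmpPt_sq, h₁, h₂, dist_comm o' w', h₃, dist_comm w o]

theorem mem_ball_of_isGeodesic (hX : IsCAT0 X) (hα : IsGeodesic α p q) (hp : p ∈ ball w r)
    (hq : q ∈ ball w r) (hs : s ∈ Icc (0:ℝ) 1) : α s ∈ ball w r := by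
  rw [mem_ball] at *
  set M := max (dist p w) (dist q w)
  have hM : dist (α s) w ^ 2 ≤ M ^ 2 := by
    have := hX.dist_sq_le hα w hs
    have hpM := pow_le_pow_left₀ dist_nonneg (le_max_left (dist p w) (dist q w)) 2
    have hqM := pow_le_pow_left₀ dist_nonneg (le_max_right (dist p w) (dist q w)) 2
    nlinarith [hs.1, hs.2, mul_nonneg (mul_nonneg hs.1 (sub_nonneg.2 hs.2)) (sq_nonneg (dist p q))]
  exact ((sq_le_sq₀ dist_nonneg (le_max_of_le_left dist_nonneg)).1 hM).trans_lt (max_lt hp hq)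

theorem apply_div_eq (hX : IsCAT0 X) (hγ : IsGeodesic γ o y)
    (h : dist o z + dist z y = dist o y) : γ (dist o z / dist o y) = z := by
  have hs := div_dist_mem_Icc dist_nonneg (h ▸ le_add_of_nonneg_right dist_nonneg)
  have key := hX.dist_sq_le hγ z hs
  have hzero : (1 - dist o z / dist o y) * dist o z ^ 2 + dist o z / dist o y * dist y z ^ 2
      - dist o z / dist o y * (1 - dist o z / dist o y) * dist o y ^ 2 = 0 := by
    rw [← h, dist_comm y z]
    rcases (add_nonneg (dist_nonneg (x := o) (y := z)) (dist_nonneg (x := z) (y := y))).eq_or_lt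
      with h0 | h0
    · obtain ⟨h₁, h₂⟩ := (add_eq_zero_iff_of_nonneg dist_nonneg dist_nonneg).1 h0.symm
      simp [h₁, h₂]
    · field_simp
      ring
  rw [hzero] at key
  exact dist_le_zero.1 (by nlinarith [dist_nonneg (x := γ (dist o z / dist o y)) (y := z)])

theorem dist_sq_le_dist_sq_add_dist_sq (hX : IsCAT0 X) (hα : IsGeodesic α o v)
    (hs : s ∈ Icc (0:ℝ) 1) (ht : t ∈ Icc (0:ℝ) 1) (hst : s ≤ t) (hw : dist o w = dist o (α t)) :
    dist (α s) w ^ 2 ≤ dist (α s) (α t) ^ 2 + dist (α t) w ^ 2 := by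
  rcases ht.1.eq_or_lt with rfl | ht₀
  · obtain rfl : s = 0 := le_antisymm hst hs.1
    simp
  have hα' := hα.restrict (left_mem_Icc.2 zero_le_one) ht ht.1
  rw [hα.1] at hα'
  have hst' : s / t ∈ Icc (0:ℝ) 1 := ⟨div_nonneg hs.1 ht.1, div_le_one_of_le₀ hst ht.1⟩
  have key := hX.dist_sq_le hα' w hst'
  simp only [zero_add, sub_zero, div_mul_cancel₀ s ht₀.ne'] at key
  have hd : dist (α s) (α t) = (1 - s / t) * dist o (α t) := by
    rw [hα.dist_eq hs ht, hα.dist_left ht, abs_of_nonpos (by linarith)]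
    field_simp
    ring
  rw [hw] at key
  rw [hd]
  nlinarith [mul_nonneg (sub_nonneg.2 hst'.2) (sq_nonneg (dist (α t) w))]

theorem dist_div_le_two_mul (hX : IsCAT0 X) (hα : IsGeodesic α o w) (hβ : IsGeodesic β o w')
    (hr : 0 ≤ r) (hw : r ≤ dist o w) (hw' : r ≤ dist o w') :
    dist (α (r / dist o w)) (β (r / dist o w')) ≤ 2 * dist w w' := by
  have h₁ : dist (α (r / dist o w)) (β (r / dist o w)) ≤ dist w w' :=
    (hX.dist_le_mul hα hβ (div_dist_mem_Icc hr hw)).trans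
      (mul_le_of_le_one_left dist_nonneg (div_dist_mem_Icc hr hw).2)
  have h₂ : dist (β (r / dist o w)) (β (r / dist o w')) ≤ dist w w' := by
    rw [hβ.dist_eq (div_dist_mem_Icc hr hw) (div_dist_mem_Icc hr hw')]
    rcases hr.eq_or_lt with rfl | hr
    · simp
    have hpos : 0 < dist o w := hr.trans_le hw
    have hpos' : 0 < dist o w' := hr.trans_le hw'
    have hmul : (r / dist o w - r / dist o w') * dist o w' =
        r / dist o w * (dist o w' - dist o w) := by
      field_simp
    calc |r / dist o w - r / dist o w'| * dist o w'
        = r / dist o w * |dist o w - dist o w'| := by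
          rw [← abs_of_pos hpos', ← abs_mul, abs_of_pos hpos', hmul, abs_mul,
            abs_of_nonneg (div_nonneg hr.le hpos.le), abs_sub_comm]
      _ ≤ |dist o w - dist o w'| :=
          mul_le_of_le_one_left (abs_nonneg _) (div_le_one_of_le₀ hw hpos.le)
      _ = |dist w o - dist w' o| := by rw [dist_comm o w, dist_comm o w']
      _ ≤ dist w w' := abs_dist_sub_le w w' o
  linarith [dist_triangle (α (r / dist o w)) (β (r / dist o w)) (β (r / dist o w'))]

theorem dist_add_div_le (hX : IsCAT0 X) (hγ : IsGeodesic γ o y) (hη : IsGeodesic η o w)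
    {δ : ℝ} (hr : 0 ≤ r) (hδ : 0 < δ) (hy : r + δ ≤ dist o y) (hw : r + δ ≤ dist o w) :
    dist (γ ((r + δ) / dist o y)) (η ((r + δ) / dist o w)) ≤
      dist (γ (r / dist o y)) (η (r / dist o w)) + 2 * (δ / (dist o y - r)) * dist y w := by
  have hLr : 0 < dist o y - r := by linarith
  have hlam : δ / (dist o y - r) ∈ Icc (0:ℝ) 1 :=
    ⟨by positivity, div_le_one_of_le₀ (by linarith) hLr.le⟩
  have hry := div_dist_mem_Icc hr (by linarith : r ≤ dist o y)
  have hrw := div_dist_mem_Icc hr (by linarith : r ≤ dist o w)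
  have hγT := hγ.restrict hry (right_mem_Icc.2 zero_le_one) hry.2
  have hηT := hη.restrict hrw (right_mem_Icc.2 zero_le_one) hrw.2
  rw [hγ.2.1] at hγT
  rw [hη.2.1] at hηT
  set L := dist o y
  set L' := dist o w
  set lam := δ / (L - r)
  have hL : L ≠ 0 := by linarith
  have hL' : L' ≠ 0 := by linarith
  -- compare the tails of `γ` and `η` beyond distance `r` at parameter `lam`: there the tail of `γ`
  -- is at distance `r + δ` from `o`, that of `η` within `lam * d(y, w)` of it
  have hpair := hX.dist_le_add hγT hηT hlam
  have hγlam : r / L + lam * (1 - r / L) = (r + δ) / L := by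
    simp only [lam]
    field_simp
  have hηlam : r / L' + lam * (1 - r / L') = (r + lam * (L' - r)) / L' := by
    field_simp
  have hη₁ : 0 ≤ r + lam * (L' - r) := by nlinarith [hlam.1]
  have hη₂ : r + lam * (L' - r) ≤ L' := by nlinarith [hlam.2]
  have hgap : dist (η ((r + lam * (L' - r)) / L')) (η ((r + δ) / L')) ≤ lam * dist y w := by
    rw [hη.dist_div_div hη₁ hη₂ (by linarith) hw]
    calc |r + lam * (L' - r) - (r + δ)| = lam * |L' - L| := by
          rw [show r + lam * (L' - r) - (r + δ) = lam * (L' - L) by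
            simp only [lam]; field_simp; ring, abs_mul, abs_of_nonneg hlam.1]
      _ ≤ lam * dist y w := by
          refine mul_le_mul_of_nonneg_left ?_ hlam.1
          show |dist o w - dist o y| ≤ dist y w
          rw [dist_comm o w, dist_comm o y, dist_comm y w]
          exact abs_dist_sub_le w y o
  simp only [hγlam, hηlam] at hpair
  have hdr := mul_le_of_le_one_left (dist_nonneg (x := γ (r / L)) (y := η (r / L')))
    (sub_le_self 1 hlam.1)
  linarith [dist_triangle (γ ((r + δ) / L)) (η ((r + lam * (L' - r)) / L')) (η ((r + δ) / L'))]

theorem dist_sub_div_sq_le (hX : IsCAT0 X) (hγ : IsGeodesic γ o y) {δ : ℝ} (hδ : 0 ≤ δ)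
    (hδr : δ ≤ r) (hr : r ≤ dist o y) (hw : dist o w = r) :
    dist (γ ((r - δ) / dist o y)) w ^ 2 ≤ δ ^ 2 + dist (γ (r / dist o y)) w ^ 2 := by
  have h₀ : 0 ≤ r - δ := sub_nonneg.2 hδr
  have h := hX.dist_sq_le_dist_sq_add_dist_sq hγ (w := w) (div_dist_mem_Icc h₀ (by linarith))
    (div_dist_mem_Icc (by linarith) hr) (div_le_div_of_nonneg_right (by linarith) dist_nonneg)
    (by rw [hγ.dist_left_div (by linarith) hr, hw])
  rwa [hγ.dist_div_div h₀ (by linarith) (by linarith) hr, sq_abs, sub_sub_cancel_left,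
    neg_sq] at h

theorem dist_add_div_sq_le (hX : IsCAT0 X) (hγ : IsGeodesic γ o y) (hη : IsGeodesic η o w)
    {δ : ℝ} (hr : 0 ≤ r) (hδ : 0 < δ) (hy : r + δ ≤ dist o y) (hw : r + δ ≤ dist o w) :
    dist (η (r / dist o w)) (γ ((r + δ) / dist o y)) ^ 2 ≤ δ ^ 2 +
      (dist (γ (r / dist o y)) (η (r / dist o w)) + 2 * (δ / (dist o y - r)) * dist y w) ^ 2 := by
  have h := hX.dist_sq_le_dist_sq_add_dist_sq hη (w := γ ((r + δ) / dist o y))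
    (div_dist_mem_Icc hr (by linarith)) (div_dist_mem_Icc (by linarith) hw)
    (div_le_div_of_nonneg_right (by linarith) dist_nonneg)
    (by rw [hγ.dist_left_div (by linarith) hy, hη.dist_left_div (by linarith) hw])
  rw [hη.dist_div_div hr (by linarith) (by linarith) hw, sq_abs, sub_add_cancel_left, neg_sq,
    dist_comm (η ((r + δ) / dist o w))] at h
  nlinarith [pow_le_pow_left₀ dist_nonneg (hX.dist_add_div_le hγ hη hr hδ hy hw) 2]

theorem exists_isGeodesic_dist_eq (hX : IsCAT0 X) (hozy : dist o z + dist z y = dist o y)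
    (hyx : dist y x ≤ dist z y) (hσ : IsGeodesic σ o x) (ht : 0 ≤ t)
    (htσ : t ≤ dist (σ (dist o z / dist o x)) z) :
    ∃ w η, dist y w ≤ dist y x ∧ IsGeodesic η o w ∧ dist (η (dist o z / dist o w)) z = t := by
  obtain ⟨τ, hτ⟩ := hX.1 y x
  choose G hG using hX.1 o
  have hτy : ∀ s ∈ Icc (0:ℝ) 1, dist y (τ s) ≤ dist y x := fun s hs => by
    rw [hτ.dist_left hs]
    exact mul_le_of_le_one_left dist_nonneg hs.2
  have hfar : ∀ s ∈ Icc (0:ℝ) 1, dist o z ≤ dist o (τ s) := fun s hs => by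
    linarith [hτy s hs, dist_triangle o (τ s) y, dist_comm y (τ s)]
  set φ := fun s => dist (G (τ s) (dist o z / dist o (τ s))) z
  have hφ : ContinuousOn φ (Icc 0 1) := by
    refine (LipschitzOnWith.of_dist_le_mul (K := 2 * nndist y x) fun s hs s' hs' => ?_).continuousOn
    calc dist (φ s) (φ s')
        ≤ dist (G (τ s) (dist o z / dist o (τ s))) (G (τ s') (dist o z / dist o (τ s'))) :=
          dist_dist_dist_le_left _ _ _
      _ ≤ 2 * dist (τ s) (τ s') :=
          hX.dist_div_le_two_mul (hG _) (hG _) dist_nonneg (hfar s hs) (hfar s' hs')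
      _ = 2 * nndist y x * dist s s' := by
          rw [hτ.dist_eq hs hs', Real.dist_eq]
          push_cast
          ring
  have hφ₀ : φ 0 = 0 := by simp only [φ, hτ.1, hX.apply_div_eq (hG y) hozy, dist_self]
  have hφ₁ : t ≤ φ 1 := by
    have hx : dist o z ≤ dist o x := by simpa [hτ.2.1] using hfar 1 (right_mem_Icc.2 zero_le_one)
    simp only [φ, hτ.2.1]
    rwa [hX.eq_of_isGeodesic (hG x) hσ (div_dist_mem_Icc dist_nonneg hx)]
  obtain ⟨s, hs, hφs⟩ := intermediate_value_Icc zero_le_one hφ ⟨by rw [hφ₀]; exact ht, hφ₁⟩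
  exact ⟨τ s, G (τ s), hτy s hs, hG _, hφs⟩

end IsCAT0

namespace UpperHalfPlane

theorem two_mul_im_mul_im_mul_cosh_dist (z w : ℍ) :
    2 * z.im * w.im * cosh (dist z w) = (z.re - w.re) ^ 2 + z.im ^ 2 + w.im ^ 2 := by
  rw [cosh_dist', mul_div_cancel₀ _ (by have := z.im_pos; have := w.im_pos; positivity)]

theorem midpoint_re_im {P Q M : ℍ} (hPM : dist P M = dist P Q / 2)
    (hMQ : dist M Q = dist P Q / 2) :
    M.re * (P.im + Q.im) = P.re * Q.im + Q.re * P.im ∧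
      M.im * (P.im + Q.im) = 2 * cosh (dist P Q / 2) * P.im * Q.im := by
  rcases (dist_nonneg (x := P) (y := Q)).eq_or_lt with hPQ | hPQ
  · rw [← hPQ, zero_div] at hPM hMQ
    obtain rfl := dist_eq_zero.1 hPM
    obtain rfl := dist_eq_zero.1 hMQ
    exact ⟨by ring, by simp only [dist_self, zero_div, cosh_zero]; ring⟩
  set C := cosh (dist P Q / 2)
  have hC : 1 < C := Real.one_lt_cosh.2 (by positivity)
  have hP := P.im_pos
  have hQ := Q.im_pos
  have e₁ := two_mul_im_mul_im_mul_cosh_dist P M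
  have e₂ := two_mul_im_mul_im_mul_cosh_dist M Q
  have e₃ := two_mul_im_mul_im_mul_cosh_dist P Q
  rw [hPM] at e₁
  rw [hMQ] at e₂
  rw [show dist P Q = 2 * (dist P Q / 2) by ring, cosh_two_mul, sinh_sq] at e₃
  -- `M` is the tangency point of two Euclidean circles, whose centres lie on the line through it
  have circ₁ : (M.re - P.re) ^ 2 + (M.im - C * P.im) ^ 2 = (C ^ 2 - 1) * P.im ^ 2 := by
    linear_combination -e₁
  have circ₂ : (M.re - Q.re) ^ 2 + (M.im - C * Q.im) ^ 2 = (C ^ 2 - 1) * Q.im ^ 2 := by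
    linear_combination -e₂
  have hcent : (P.re - Q.re) ^ 2 + (C * P.im - C * Q.im) ^ 2 = (C ^ 2 - 1) * (P.im + Q.im) ^ 2 := by
    linear_combination -e₃
  have hdot : (M.re - P.re) * (Q.re - P.re) + (M.im - C * P.im) * (C * Q.im - C * P.im) =
      (C ^ 2 - 1) * P.im * (P.im + Q.im) := by
    linear_combination (1/2) * circ₁ - (1/2) * circ₂ + (1/2) * hcent
  have hcross : (M.re - P.re) * (C * Q.im - C * P.im) - (M.im - C * P.im) * (Q.re - P.re) = 0 := by
    refine pow_eq_zero_iff two_ne_zero |>.1 ?_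
    linear_combination ((P.re - Q.re) ^ 2 + (C * P.im - C * Q.im) ^ 2) * circ₁
      + ((C ^ 2 - 1) * P.im ^ 2) * hcent
      - ((M.re - P.re) * (Q.re - P.re) + (M.im - C * P.im) * (C * Q.im - C * P.im)
        + (C ^ 2 - 1) * P.im * (P.im + Q.im)) * hdot
  have hne : (C ^ 2 - 1) * (P.im + Q.im) ≠ 0 := by
    have : 0 < C ^ 2 - 1 := by nlinarith
    positivity
  constructor
  · refine mul_right_cancel₀ hne ?_
    linear_combination (Q.re - P.re) * hdot + (C * Q.im - C * P.im) * hcross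
      - (M.re - P.re) * hcent
  · refine mul_right_cancel₀ hne ?_
    linear_combination (C * Q.im - C * P.im) * hdot - (Q.re - P.re) * hcross
      - (M.im - C * P.im) * hcent

theorem cosh_dist_mul_cosh_half_dist {P Q M : ℍ} (hPM : dist P M = dist P Q / 2)
    (hMQ : dist M Q = dist P Q / 2) (U : ℍ) :
    cosh (dist U M) * cosh (dist P Q / 2) =
      (cosh (dist U P) + cosh (dist U Q)) / 2 := by
  obtain ⟨hre, him⟩ := midpoint_re_im hPM hMQ
  set C := cosh (dist P Q / 2)
  have hP := P.im_pos
  have hQ := Q.im_pos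
  have hM := M.im_pos
  have hU := U.im_pos
  have e₃ := two_mul_im_mul_im_mul_cosh_dist P Q
  rw [show dist P Q = 2 * (dist P Q / 2) by ring, cosh_two_mul, sinh_sq] at e₃
  have hnorm : (M.re ^ 2 + M.im ^ 2) * (P.im + Q.im) =
      (P.re ^ 2 + P.im ^ 2) * Q.im + (Q.re ^ 2 + Q.im ^ 2) * P.im := by
    refine mul_right_cancel₀ (by positivity : P.im + Q.im ≠ 0) ?_
    linear_combination (M.re * (P.im + Q.im) + (P.re * Q.im + Q.re * P.im)) * hre
      + (M.im * (P.im + Q.im) + 2 * C * P.im * Q.im) * him + P.im * Q.im * e₃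
  rw [cosh_dist', cosh_dist', cosh_dist']
  field_simp
  linear_combination (-(U.re ^ 2 + U.im ^ 2) - (M.re ^ 2 + M.im ^ 2) + 2 * U.re * M.re) * him
    - 2 * U.re * M.im * hre + M.im * hnorm

end UpperHalfPlane

namespace Real

theorem sinh_lt_mul_cosh {u : ℝ} (hu : 0 < u) : sinh u < u * cosh u := by
  have hderiv : ∀ v : ℝ, HasDerivAt (fun v => v * cosh v - sinh v) (v * sinh v) v := fun v =>
    (((hasDerivAt_id' v).mul (hasDerivAt_cosh v)).sub (hasDerivAt_sinh v)).congr_deriv (by ring)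
  have hmono : StrictMonoOn (fun v => v * cosh v - sinh v) (Ici 0) := by
    refine strictMonoOn_of_deriv_pos (convex_Ici 0) (by fun_prop) fun v hv => ?_
    rw [interior_Ici] at hv
    rw [(hderiv v).deriv]
    exact mul_pos hv (sinh_pos_iff.2 hv)
  simpa using hmono self_mem_Ici hu.le hu

theorem strictMonoOn_sinh_div : StrictMonoOn (fun u => sinh u / u) (Ioi 0) := by
  refine strictMonoOn_of_deriv_pos (convex_Ioi 0)
    (continuous_sinh.continuousOn.div continuousOn_id fun u hu => hu.ne') fun u hu => ?_
  rw [interior_Ioi, mem_Ioi] at hu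
  have hderiv : HasDerivAt (fun u => sinh u / u) ((cosh u * u - sinh u * 1) / u ^ 2) u :=
    (hasDerivAt_sinh u).div (hasDerivAt_id' u) hu.ne'
  rw [hderiv.deriv]
  have := sinh_lt_mul_cosh hu
  exact div_pos (by linarith) (by positivity)

theorem strictConvexOn_cosh_sqrt : StrictConvexOn ℝ (Ici 0) fun t => cosh √t := by
  refine StrictMonoOn.strictConvexOn_of_deriv (convex_Ici 0) (by fun_prop) ?_
  rw [interior_Ici]
  intro a ha b hb hab
  have hderiv : ∀ t ∈ Ioi (0:ℝ), deriv (fun t => cosh √t) t = sinh √t / √t / 2 := fun t ht => by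
    rw [((hasDerivAt_sqrt (ne_of_gt ht)).cosh).deriv]
    field_simp
  rw [hderiv a ha, hderiv b hb]
  have := strictMonoOn_sinh_div (sqrt_pos.2 ha) (sqrt_pos.2 hb) (sqrt_lt_sqrt (le_of_lt ha) hab)
  simp only at this
  linarith

theorem cosh_sqrt_sq_add_sq_lt {x y : ℝ} (hx : 0 < x) (hy : 0 < y) :
    cosh √(x ^ 2 + y ^ 2) < cosh x * cosh y := by
  have hne : (x + y) ^ 2 ≠ (x - y) ^ 2 := by nlinarith [mul_pos hx hy]
  have := strictConvexOn_cosh_sqrt.2 (mem_Ici.2 (sq_nonneg (x + y))) (mem_Ici.2 (sq_nonneg (x - y)))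
    hne (by norm_num : (0:ℝ) < 1 / 2) (by norm_num : (0:ℝ) < 1 / 2) (by norm_num)
  simp only [smul_eq_mul] at this
  rw [
    show 1 / 2 * (x + y) ^ 2 + 1 / 2 * (x - y) ^ 2 = x ^ 2 + y ^ 2 by ring, sqrt_sq_eq_abs,
    sqrt_sq_eq_abs, cosh_abs, cosh_abs, cosh_add, cosh_sub] at this
  linarith

theorem exists_pos_cosh_sqrt_add_lt {t : ℝ} (ht : 0 < t) :
    ∃ e > 0, cosh √(t ^ 2 + t ^ 2) + cosh √(t ^ 2 + (t + e) ^ 2) < 2 * (cosh t * cosh t) := by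
  have hlt := cosh_sqrt_sq_add_sq_lt ht ht
  have hcont : Continuous fun e => cosh √(t ^ 2 + (t + e) ^ 2) := by fun_prop
  have hev : ∀ᶠ e in nhds 0,
      cosh √(t ^ 2 + (t + e) ^ 2) < 2 * (cosh t * cosh t) - cosh √(t ^ 2 + t ^ 2) :=
    hcont.continuousAt.eventually_lt continuousAt_const (by simp only [add_zero]; linarith)
  obtain ⟨e, he, he_pos⟩ := ((hev.filter_mono nhdsWithin_le_nhds).and self_mem_nhdsWithin).exists
    (f := nhdsWithin 0 (Ioi 0))
  exact ⟨e, he_pos, by linarith⟩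

end Real

namespace IsCATm1Point

open IsGeodesic

variable {X : Type*} [MetricSpace X] {a b o u w y z : X} {η : ℝ → X} {c e t : ℝ}

theorem cosh_dist_mul_cosh_le (hX : IsCAT0 X) (hz : IsCATm1Point z c)
    (hab : dist a z + dist z b = dist a b) (hmid : dist a z = dist z b) (ha : a ∈ ball z c)
    (hb : b ∈ ball z c) (hu : u ∈ ball z c) :
    cosh (dist u z) * cosh (dist a b / 2) ≤ (cosh (dist u a) + cosh (dist u b)) / 2 := by
  obtain ⟨ξ₁, hξ₁⟩ := hX.1 b u
  obtain ⟨ξ₂, hξ₂⟩ := hX.1 u a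
  obtain ⟨ζ, hζ⟩ := hX.1 a b
  have hle : dist a z ≤ dist a b := hab ▸ le_add_of_nonneg_right dist_nonneg
  have hs := div_dist_mem_Icc dist_nonneg hle
  obtain ⟨p', q', r', τpq, τqr, τrp, -, hτqr, hτrp, h₁, h₂, h₃, hcmp⟩ :=
    hz.2 b u a ξ₁ ξ₂ ζ hξ₁ hξ₂ hζ
    (fun s hs => hX.mem_ball_of_isGeodesic hξ₁ hb hu hs)
    (fun s hs => hX.mem_ball_of_isGeodesic hξ₂ hu ha hs)
    (fun s hs => hX.mem_ball_of_isGeodesic hζ ha hb hs)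
  have key := hcmp 1 2 0 (left_mem_Icc.2 zero_le_one) _ hs
  simp only [Matrix.cons_val_zero, Matrix.cons_val_one, Matrix.cons_val_two, Matrix.tail_cons,
    Matrix.head_cons] at key
  rw [hξ₂.1, hX.apply_div_eq hζ hab, hτqr.1] at key
  have hhalf : dist a z = dist a b / 2 := by linarith
  have hrM : dist r' (τrp (dist a z / dist a b)) = dist r' p' / 2 := by
    rw [hτrp.dist_left hs, h₃, div_dist_mul_dist dist_nonneg hle, hhalf]
  have hMp : dist (τrp (dist a z / dist a b)) p' = dist r' p' / 2 := by
    rw [hτrp.dist_right hs, h₃, sub_mul, one_mul, div_dist_mul_dist dist_nonneg hle, hhalf]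
    ring
  have hmed := UpperHalfPlane.cosh_dist_mul_cosh_half_dist hrM hMp q'
  rw [h₃, h₂, dist_comm q' p', h₁, dist_comm b u] at hmed
  rw [← hmed]
  refine mul_le_mul_of_nonneg_right (cosh_le_cosh.2 ?_) (cosh_pos _).le
  rwa [abs_of_nonneg dist_nonneg, abs_of_nonneg dist_nonneg]

theorem two_mul_cosh_mul_cosh_le (hX : IsCAT0 X) (hz : IsCATm1Point z c)
    (hozy : dist o z + dist z y = dist o y) (hη : IsGeodesic η o w)
    (hu : dist (η (dist o z / dist o w)) z = t) (ht : 0 < t) (htc : t < c)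
    (htoz : t ≤ dist o z) (hzy : t + dist y w ≤ dist z y) (he : 2 * (t / dist z y) * dist y w ≤ e) :
    2 * (cosh t * cosh t) ≤ cosh √(t ^ 2 + t ^ 2) + cosh √(t ^ 2 + (t + e) ^ 2) := by
  obtain ⟨γ, hγ⟩ := hX.1 o y
  have hzγ := hX.apply_div_eq hγ hozy
  have hL : dist o z + t ≤ dist o y := by linarith [dist_nonneg (x := y) (y := w)]
  have hL' : dist o z + t ≤ dist o w := by linarith [dist_triangle o w y, dist_comm w y]
  have hzy' : dist o y - dist o z = dist z y := by linarith
  have hua := hX.dist_sub_div_sq_le hγ ht.le htoz (by linarith)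
    (hη.dist_left_div dist_nonneg (by linarith))
  have hub := hX.dist_add_div_sq_le hγ hη dist_nonneg ht hL hL'
  rw [hzγ, dist_comm z, hu] at hua hub
  rw [hzy'] at hub
  set a := γ ((dist o z - t) / dist o y)
  set b := γ ((dist o z + t) / dist o y)
  have haz : dist a z = t := by
    rw [← hzγ, hγ.dist_div_div (by linarith) (by linarith) dist_nonneg (by linarith)]
    simp [abs_of_pos ht]
  have hzb : dist z b = t := by
    rw [← hzγ, hγ.dist_div_div dist_nonneg (by linarith) (by linarith) hL]
    simp [abs_of_pos ht]
  have hab : dist a b = 2 * t := by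
    rw [hγ.dist_div_div (by linarith) (by linarith) (by linarith) hL, abs_of_neg (by linarith)]
    ring
  have hball : ∀ p, dist p z = t → p ∈ ball z c := fun p hp => by rwa [mem_ball, hp]
  have hmed := hz.cosh_dist_mul_cosh_le hX (by rw [haz, hzb, hab]; ring) (haz.trans hzb.symm)
    (hball a haz) (hball b (dist_comm b z ▸ hzb)) (hball _ hu)
  rw [hu, hab, mul_div_cancel_left₀ t two_ne_zero] at hmed
  have hcosh : ∀ {x s : ℝ}, x ^ 2 ≤ s → cosh x ≤ cosh √s := fun h =>
    cosh_le_cosh.2 ((abs_le_sqrt h).trans (le_abs_self _))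
  have hub' : dist (η (dist o z / dist o w)) b ^ 2 ≤ t ^ 2 + (t + e) ^ 2 := by
    nlinarith [pow_le_pow_left₀ (by positivity : 0 ≤ t + 2 * (t / dist z y) * dist y w)
      (by linarith : t + 2 * (t / dist z y) * dist y w ≤ t + e) 2]
  linarith [hcosh (dist_comm a _ ▸ hua), hcosh hub']

end IsCATm1Point

theorem geodesic_meets_ball_of_CATm1_point_general
    (X : Type*) [MetricSpace X]
    (hCAT0 : IsCAT0 X)
    (R ε c : ℝ) (hR : 0 < R) (hε : 0 < ε) (hc : 0 < c) :
    ∃ k : ℝ, 0 < k ∧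
      ∀ o z y x : X,
        dist o z + dist z y = dist o y →
        dist x y ≤ R → k ≤ dist z y →
        IsCATm1Point z c →
        ∀ σ : ℝ → X, IsGeodesic σ o x →
          ∃ s ∈ Set.Icc (0:ℝ) 1, dist (σ s) z < ε := by
  obtain ⟨t, ht, htε, htc⟩ : ∃ t, 0 < t ∧ t < ε ∧ t < c :=
    ⟨min ε c / 2, by positivity, by linarith [min_le_left ε c], by linarith [min_le_right ε c]⟩
  obtain ⟨e, he, hcosh⟩ := Real.exists_pos_cosh_sqrt_add_lt ht
  refine ⟨2 * t * R / e + R + t, by positivity, fun o z y x hozy hxy hk hz σ hσ => ?_⟩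
  by_contra! hfar
  have hRk : R + t ≤ dist z y := by linarith [div_nonneg (by positivity : 0 ≤ 2 * t * R) he.le]
  have hoz : t ≤ dist o z := by
    simpa [hσ.1] using (hfar 0 (left_mem_Icc.2 zero_le_one)).trans' htε.le
  have hx : dist o z ≤ dist o x := by linarith [dist_triangle o x y]
  obtain ⟨w, η, hw, hη, hu⟩ := hCAT0.exists_isGeodesic_dist_eq hozy (by linarith [dist_comm x y])
    hσ ht.le ((hfar _ (div_dist_mem_Icc dist_nonneg hx)).trans' htε.le)
  have hzy : 0 < dist z y := by linarith
  refine hcosh.not_ge (hz.two_mul_cosh_mul_cosh_le hCAT0 hozy hη hu ht htc hoz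
    (by linarith [dist_comm x y]) ?_)
  calc 2 * (t / dist z y) * dist y w ≤ 2 * (t / dist z y) * R := by
        gcongr; linarith [dist_comm x y]
    _ = 2 * t * R / dist z y := by ring
    _ ≤ e := by
      rw [div_le_iff₀ hzy]
      nlinarith [mul_le_mul_of_nonneg_left hk he.le, div_mul_cancel₀ (2 * t * R) he.ne']

/-- Lemma 3.4. In a nonempty cocompact proper CAT(0) space, for all
`R, ε, c > 0` there exists `k > 0` such that, whenever `z` lies on a geodesic from `o`
to `y`, `d(x, y) ≤ R`, `d(z, y) ≥ k`, and `z` is a CAT(-1) point of radius `c`, every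
geodesic from `o` to `x` meets the open ball of radius `ε` around `z`. -/
theorem geodesic_meets_ball_of_CATm1_point
    (X : Type*) [MetricSpace X] [Nonempty X] [ProperSpace X]
    (hCAT0 : IsCAT0 X) (hcocompact : Cocompact X)
    (R ε c : ℝ) (hR : 0 < R) (hε : 0 < ε) (hc : 0 < c) :
    ∃ k : ℝ, 0 < k ∧
      ∀ o z y x : X,
        dist o z + dist z y = dist o y →
        dist x y ≤ R → k ≤ dist z y →
        IsCATm1Point z c →
        ∀ σ : ℝ → X, IsGeodesic σ o x →
          ∃ s ∈ Set.Icc (0:ℝ) 1, dist (σ s) z < ε :=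
  geodesic_meets_ball_of_CATm1_point_general X hCAT0 R ε c hR hε hc
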